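/- arXiv:1111.6505 — 3 statements merged into one kernel-verified Lean document; each statement's English description precedes it below -/
import Mathlib

section
/- Let F be a finite-dimensional real inner product space and let T : ℝⁿ → F be twice continuously differentiable. At every point x where T(x) ≠ 0, the function y ↦ ‖T(y)‖ is twice continuously differentiable in a neighborhood of x and satisfies ‖T(x)‖·Δ(‖T‖)(x) ≥ ⟨T(x), ΔT(x)⟩; equivalently, −‖T‖·Δ‖T‖ ≤ −⟨T, ΔT⟩ at x. -/
/-!
By Cauchy–Schwarz, `y ↦ ‖T x‖ ‖T y‖ - ⟪T x, T y⟫` is nonnegative and vanishes at `x`, so its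
Laplacian at `x` is nonnegative. The Laplacian is linear and commutes with the functional
`⟪T x, ·⟫`, which turns this into the inequality.

Nonnegativity of second derivatives at a minimum reduces to one variable along lines; there a
negative second derivative would, by the second derivative test, make the minimum also a
maximum, so the function would be locally constant and its second derivative zero.
-/

open scoped RealInnerProductSpace

/-- The componentwise Laplacian `ΔT = ∑_{i=1}^n ∂²T/∂x_i²` of a map
`T : ℝⁿ → F`, expressed via the second iterated Fréchet derivative. -/
noncomputable def lap {n : ℕ} {F : Type*} [NormedAddCommGroup F] [NormedSpace ℝ F]
    (T : EuclideanSpace ℝ (Fin n) → F) (x : EuclideanSpace ℝ (Fin n)) : F :=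
  ∑ i : Fin n,
    iteratedFDeriv ℝ 2 T x ![EuclideanSpace.single i 1, EuclideanSpace.single i 1]

open Filter Topology

theorem IsLocalMin.deriv_deriv_nonneg {f : ℝ → ℝ} {a : ℝ} (h : IsLocalMin f a)
    (hf : ContinuousAt f a) : 0 ≤ deriv (deriv f) a := by
  by_contra! hneg
  have hmax : IsLocalMax f a := isLocalMax_of_deriv_deriv_neg hneg h.deriv_eq_zero hf
  have hconst : f =ᶠ[𝓝 a] fun _ => f a :=
    (h.and hmax).mono fun _ hy => le_antisymm hy.2 hy.1
  simp [hconst.deriv.deriv_eq] at hneg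

theorem ContDiffAt.deriv_deriv_comp_add_smul {𝕜 E F : Type*} [NontriviallyNormedField 𝕜]
    [NormedAddCommGroup E] [NormedSpace 𝕜 E] [NormedAddCommGroup F] [NormedSpace 𝕜 F]
    {f : E → F} {x : E} (hf : ContDiffAt 𝕜 2 f x) (y : E) :
    deriv (deriv fun s : 𝕜 => f (x + s • y)) 0 = iteratedFDeriv 𝕜 2 f x (fun _ => y) := by
  have hline : Tendsto (fun s : 𝕜 => x + s • y) (𝓝 0) (𝓝 x) := by
    simpa using ((continuous_id.smul continuous_const).const_add x).tendsto (0 : 𝕜)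
  have hderiv : deriv (fun s : 𝕜 => f (x + s • y)) =ᶠ[𝓝 0]
      fun s => iteratedFDeriv 𝕜 1 f (x + s • y) (fun _ => y) := by
    filter_upwards [hline.eventually (hf.eventually (by simp))] with s hs
    simpa using (hs.of_le (by norm_num) : ContDiffAt 𝕜 (0 + 1) f _).deriv_fderiv_add_smul
  rw [hderiv.deriv_eq]
  simpa using ContDiffAt.deriv_fderiv_add_smul (t := (0 : 𝕜)) (n := 1) (y := y)
    (by simpa [one_add_one_eq_two] using hf)

theorem IsLocalMin.iteratedFDeriv_two_nonneg {E : Type*} [NormedAddCommGroup E]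
    [NormedSpace ℝ E] {g : E → ℝ} {x : E} (h : IsLocalMin g x) (hg : ContDiffAt ℝ 2 g x)
    (v : E) : 0 ≤ iteratedFDeriv ℝ 2 g x (fun _ => v) := by
  have hline : ContinuousAt (fun s : ℝ => x + s • v) 0 := by fun_prop
  have hx : x + (0 : ℝ) • v = x := by simp
  rw [← hg.deriv_deriv_comp_add_smul]
  refine IsLocalMin.deriv_deriv_nonneg ?_ (hg.continuousAt.comp_of_eq hline hx)
  exact IsLocalMin.comp_continuous (g := fun s : ℝ => x + s • v) (by rwa [hx]) hline

section Laplacian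

variable {n : ℕ} {F : Type*} [NormedAddCommGroup F] [NormedSpace ℝ F]
  {f g : EuclideanSpace ℝ (Fin n) → F} {x : EuclideanSpace ℝ (Fin n)}

theorem lap_sub (hf : ContDiffAt ℝ 2 f x) (hg : ContDiffAt ℝ 2 g x) :
    lap (f - g) x = lap f x - lap g x := by
  simp only [lap, iteratedFDeriv_sub_apply hf hg, sub_apply, Finset.sum_sub_distrib]

theorem lap_const_smul (c : ℝ) (hf : ContDiffAt ℝ 2 f x) : lap (c • f) x = c • lap f x := by
  simp only [lap, iteratedFDeriv_const_smul_apply hf, smul_apply, Finset.smul_sum]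

theorem ContinuousLinearMap.lap_comp {G : Type*} [NormedAddCommGroup G] [NormedSpace ℝ G]
    (L : F →L[ℝ] G) (hf : ContDiffAt ℝ 2 f x) : lap (L ∘ f) x = L (lap f x) := by
  simp only [lap, L.iteratedFDeriv_comp_left hf le_rfl,
    ContinuousLinearMap.compContinuousMultilinearMap_coe, Function.comp_apply, map_sum]

theorem lap_nonneg_of_isLocalMin {u : EuclideanSpace ℝ (Fin n) → ℝ} (h : IsLocalMin u x)
    (hu : ContDiffAt ℝ 2 u x) : 0 ≤ lap u x := by
  simp only [lap, Matrix.vec_single_eq_const, Matrix.vecCons_const]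
  exact Finset.sum_nonneg fun i _ => h.iteratedFDeriv_two_nonneg hu _

end Laplacian

theorem norm_laplacian_lower_bound_general {n : ℕ} {F : Type*}
    [NormedAddCommGroup F] [InnerProductSpace ℝ F]
    (T : EuclideanSpace ℝ (Fin n) → F) (hT : ContDiff ℝ 2 T)
    (x : EuclideanSpace ℝ (Fin n)) (hx : T x ≠ 0) :
    ContDiffAt ℝ 2 (fun y => ‖T y‖) x ∧
      ⟪T x, lap T x⟫ ≤ ‖T x‖ * lap (fun y => ‖T y‖) x := by
  have hnorm : ContDiffAt ℝ 2 (fun y => ‖T y‖) x := hT.contDiffAt.norm ℝ hx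
  refine ⟨hnorm, ?_⟩
  have hscaled : ContDiffAt ℝ 2 (‖T x‖ • fun y => ‖T y‖) x := hnorm.const_smul ‖T x‖
  have hinner : ContDiffAt ℝ 2 (innerSL ℝ (T x) ∘ T) x :=
    ((innerSL ℝ (T x)).contDiff.comp hT).contDiffAt
  have hmin : IsLocalMin (‖T x‖ • (fun y => ‖T y‖) - innerSL ℝ (T x) ∘ T) x :=
    Eventually.of_forall fun y => by
      show ‖T x‖ * ‖T x‖ - ⟪T x, T x⟫ ≤ ‖T x‖ * ‖T y‖ - ⟪T x, T y⟫
      rw [real_inner_self_eq_norm_mul_norm, sub_self, sub_nonneg]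
      exact real_inner_le_norm _ _
  have hlap := lap_nonneg_of_isLocalMin hmin (hscaled.sub hinner)
  rwa [lap_sub hscaled hinner, lap_const_smul _ hnorm, (innerSL ℝ (T x)).lap_comp hT.contDiffAt,
    sub_nonneg] at hlap

/-- Let `F` be a finite-dimensional real inner product space and let
`T : ℝⁿ → F` be twice continuously differentiable. At every point `x` where `T x ≠ 0`, the
function `y ↦ ‖T y‖` is twice continuously differentiable in a neighborhood of `x` and
satisfies `‖T x‖·Δ(‖T‖)(x) ≥ ⟨T x, ΔT x⟩`. -/
theorem norm_laplacian_lower_bound {n : ℕ} {F : Type*}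
    [NormedAddCommGroup F] [InnerProductSpace ℝ F] [FiniteDimensional ℝ F]
    (T : EuclideanSpace ℝ (Fin n) → F) (hT : ContDiff ℝ 2 T)
    (x : EuclideanSpace ℝ (Fin n)) (hx : T x ≠ 0) :
    ContDiffAt ℝ 2 (fun y => ‖T y‖) x ∧
      ⟪T x, lap T x⟫ ≤ ‖T x‖ * lap (fun y => ‖T y‖) x :=
  norm_laplacian_lower_bound_general T hT x hx
end

section
/- Let F be a finite-dimensional real inner product space, let p ≥ 2 be a real number, and let T : ℝⁿ → F be twice continuously differentiable. At every point x where T(x) ≠ 0, the function y ↦ ‖T(y)‖^{p/2} is twice continuously differentiable in a neighborhood of x and satisfies −Δ(‖T‖^{p/2})(x) ≤ −(p/2)·‖T(x)‖^{(p/2)−2}·⟨T(x), ΔT(x)⟩. -/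
open scoped RealInnerProductSpace

/-! Write `‖T‖ ^ r = (‖T‖ ^ 2) ^ (r / 2)` with `r = p / 2` and differentiate twice along a
direction `v`. With `a = DT(x) v`, the second derivative of `‖T‖ ^ r` along `v` exceeds
`r ‖T‖ ^ (r - 2) ⟪T, D²T(v, v)⟫` by `r ‖T‖ ^ (r - 4) ((r - 2) ⟪T, a⟫ ^ 2 + ‖T‖ ^ 2 ‖a‖ ^ 2)`,
which is nonnegative for `r ≥ 1` by Cauchy–Schwarz. Summing over the coordinate directions
gives the inequality for the Laplacians. -/

open Topology

section SecondDerivative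

variable {E G : Type*} [NormedAddCommGroup E] [NormedSpace ℝ E]
  [NormedAddCommGroup G] [NormedSpace ℝ G]

theorem DifferentiableAt.hasFDerivAt_fderiv_apply {f : E → G} {x : E}
    (hf : DifferentiableAt ℝ (fderiv ℝ f) x) (w : E) :
    HasFDerivAt (fun y => fderiv ℝ f y w) ((fderiv ℝ (fderiv ℝ f) x).flip w) x := by
  simpa using hf.hasFDerivAt.clm_apply (hasFDerivAt_const w x)

theorem fderiv_fderiv_apply_of_eventuallyEq {f h : E → G} {h' : E →L[ℝ] G} {x w : E}
    (hf : DifferentiableAt ℝ (fderiv ℝ f) x) (heq : (fun y => fderiv ℝ f y w) =ᶠ[𝓝 x] h)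
    (hh : HasFDerivAt h h' x) (v : E) :
    fderiv ℝ (fderiv ℝ f) x v w = h' v := by
  rw [← ((hf.hasFDerivAt_fderiv_apply w).congr_of_eventuallyEq heq.symm).unique hh]
  rfl

theorem fderiv_fderiv_rpow_apply {g : E → ℝ} {x : E} (hg : ContDiffAt ℝ 2 g x) (hx : g x ≠ 0)
    (s : ℝ) (v w : E) :
    fderiv ℝ (fderiv ℝ (fun y => g y ^ s)) x v w =
      s * (s - 1) * g x ^ (s - 2) * fderiv ℝ g x v * fderiv ℝ g x w +
        s * g x ^ (s - 1) * fderiv ℝ (fderiv ℝ g) x v w := by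
  have hdg : DifferentiableAt ℝ (fderiv ℝ g) x :=
    (hg.fderiv_right le_rfl).differentiableAt one_ne_zero
  have hdf : DifferentiableAt ℝ (fderiv ℝ (fun y => g y ^ s)) x :=
    ((hg.rpow_const_of_ne hx).fderiv_right le_rfl).differentiableAt one_ne_zero
  have hnear : ∀ᶠ y in 𝓝 x, DifferentiableAt ℝ g y ∧ g y ≠ 0 :=
    ((hg.eventually (by simp)).and (hg.continuousAt.eventually_ne hx)).mono
      fun y hy => ⟨hy.1.differentiableAt two_ne_zero, hy.2⟩
  have heq : (fun y => fderiv ℝ (fun y => g y ^ s) y w) =ᶠ[𝓝 x]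
      fun y => s * g y ^ (s - 1) * fderiv ℝ g y w := by
    filter_upwards [hnear] with y ⟨hgy, hy⟩
    rw [(hgy.hasFDerivAt.rpow_const (Or.inl hy)).fderiv]
    simp [mul_assoc]
  have hgs := (hg.differentiableAt two_ne_zero).hasFDerivAt.rpow_const (p := s - 1) (Or.inl hx)
  rw [fderiv_fderiv_apply_of_eventuallyEq hdf heq
    ((hgs.const_mul s).mul (hdg.hasFDerivAt_fderiv_apply w))]
  simp only [add_apply, smul_apply,
    ContinuousLinearMap.flip_apply, smul_eq_mul, sub_sub, one_add_one_eq_two]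
  ring

end SecondDerivative

section NormSq

variable {E F : Type*} [NormedAddCommGroup E] [NormedSpace ℝ E]
  [NormedAddCommGroup F] [InnerProductSpace ℝ F] {T : E → F}

theorem DifferentiableAt.fderiv_norm_sq_apply {y : E} (hT : DifferentiableAt ℝ T y) (w : E) :
    fderiv ℝ (fun y => ‖T y‖ ^ 2) y w = 2 * ⟪T y, fderiv ℝ T y w⟫ := by
  rw [hT.hasFDerivAt.norm_sq.fderiv]
  simp

theorem ContDiffAt.fderiv_fderiv_norm_sq_apply {x : E} (hT : ContDiffAt ℝ 2 T x) (v w : E) :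
    fderiv ℝ (fderiv ℝ (fun y => ‖T y‖ ^ 2)) x v w =
      2 * (⟪fderiv ℝ T x v, fderiv ℝ T x w⟫ + ⟪T x, fderiv ℝ (fderiv ℝ T) x v w⟫) := by
  have hdT : DifferentiableAt ℝ (fderiv ℝ T) x :=
    (hT.fderiv_right le_rfl).differentiableAt one_ne_zero
  have hdu : DifferentiableAt ℝ (fderiv ℝ (fun y => ‖T y‖ ^ 2)) x :=
    ((hT.norm_sq ℝ).fderiv_right le_rfl).differentiableAt one_ne_zero
  have heq : (fun y => fderiv ℝ (fun y => ‖T y‖ ^ 2) y w) =ᶠ[𝓝 x]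
      fun y => 2 * ⟪T y, fderiv ℝ T y w⟫ := by
    filter_upwards [hT.eventually (by simp)] with y hy
    exact (hy.differentiableAt two_ne_zero).fderiv_norm_sq_apply w
  rw [fderiv_fderiv_apply_of_eventuallyEq hdu heq
    (((hT.differentiableAt two_ne_zero).hasFDerivAt.inner ℝ
      (hdT.hasFDerivAt_fderiv_apply w)).const_mul 2)]
  simp only [smul_apply, ContinuousLinearMap.comp_apply, ContinuousLinearMap.prod_apply,
    ContinuousLinearMap.flip_apply, fderivInnerCLM_apply, smul_eq_mul]
  ring

theorem ContDiffAt.mul_norm_rpow_inner_le_fderiv_fderiv_norm_rpow {x : E}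
    (hT : ContDiffAt ℝ 2 T x) (hx : T x ≠ 0) {r : ℝ} (hr : 1 ≤ r) (v : E) :
    r * ‖T x‖ ^ (r - 2) * ⟪T x, fderiv ℝ (fderiv ℝ T) x v v⟫ ≤
      fderiv ℝ (fderiv ℝ (fun y => ‖T y‖ ^ r)) x v v := by
  have hsq : (fun y => ‖T y‖ ^ r) = fun y => (‖T y‖ ^ 2) ^ (r / 2) := by
    funext y
    rw [← Real.rpow_natCast, ← Real.rpow_mul (norm_nonneg _)]
    ring_nf
  have ht : 0 < ‖T x‖ := norm_pos_iff.mpr hx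
  rw [hsq, fderiv_fderiv_rpow_apply (hT.norm_sq ℝ) (by positivity),
    hT.fderiv_fderiv_norm_sq_apply, (hT.differentiableAt two_ne_zero).fderiv_norm_sq_apply]
  set t := ‖T x‖
  set a := fderiv ℝ T x v
  set c := ⟪T x, a⟫
  have hpow₁ : (t ^ 2) ^ (r / 2 - 1) = t ^ (r - 2) := by
    rw [← Real.rpow_natCast, ← Real.rpow_mul ht.le]
    ring_nf
  have hpow₂ : (t ^ 2) ^ (r / 2 - 2) = t ^ (r - 2) / t ^ 2 := by
    rw [show r / 2 - 2 = r / 2 - 1 - 1 by ring, Real.rpow_sub_one (by positivity), hpow₁]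
  have hcs : c ^ 2 / t ^ 2 ≤ ⟪a, a⟫ := by
    rw [div_le_iff₀ (by positivity), real_inner_self_eq_norm_sq, ← mul_pow, ← sq_abs c]
    exact pow_le_pow_left₀ (abs_nonneg _) ((abs_real_inner_le_norm _ _).trans_eq (mul_comm _ _)) 2
  have hm : 0 ≤ t ^ (r - 2) := Real.rpow_nonneg ht.le _
  have hk : 0 ≤ c ^ 2 / t ^ 2 := by positivity
  have hgap : 0 ≤ r * t ^ (r - 2) * ((r - 1) * (c ^ 2 / t ^ 2) + (⟪a, a⟫ - c ^ 2 / t ^ 2)) :=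
    mul_nonneg (mul_nonneg (by linarith) hm)
      (add_nonneg (mul_nonneg (by linarith) hk) (sub_nonneg.mpr hcs))
  rw [hpow₁, hpow₂]
  linear_combination hgap

end NormSq

theorem lap_eq_sum_fderiv_fderiv {n : ℕ} {F : Type*} [NormedAddCommGroup F] [NormedSpace ℝ F]
    (T : EuclideanSpace ℝ (Fin n) → F) (x : EuclideanSpace ℝ (Fin n)) :
    lap T x = ∑ i : Fin n,
      fderiv ℝ (fderiv ℝ T) x (EuclideanSpace.single i 1) (EuclideanSpace.single i 1) := by
  simp [lap, iteratedFDeriv_two_apply]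

theorem norm_pow_laplacian_bound_general {n : ℕ} {F : Type*}
    [NormedAddCommGroup F] [InnerProductSpace ℝ F]
    (p : ℝ) (hp : 2 ≤ p)
    (T : EuclideanSpace ℝ (Fin n) → F) (hT : ContDiff ℝ 2 T)
    (x : EuclideanSpace ℝ (Fin n)) (hx : T x ≠ 0) :
    ContDiffAt ℝ 2 (fun y => ‖T y‖ ^ (p / 2)) x ∧
      -(lap (fun y => ‖T y‖ ^ (p / 2)) x) ≤
        -(p / 2 * ‖T x‖ ^ (p / 2 - 2) * ⟪T x, lap T x⟫) := by
  refine ⟨(hT.contDiffAt.norm ℝ hx).rpow_const_of_ne (norm_ne_zero_iff.mpr hx), ?_⟩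
  rw [neg_le_neg_iff, lap_eq_sum_fderiv_fderiv, lap_eq_sum_fderiv_fderiv, inner_sum,
    Finset.mul_sum]
  exact Finset.sum_le_sum fun i _ =>
    hT.contDiffAt.mul_norm_rpow_inner_le_fderiv_fderiv_norm_rpow hx (by linarith) _

/-- Let `F` be a finite-dimensional real inner product space, let `p ≥ 2` be a
real number, and let `T : ℝⁿ → F` be twice continuously differentiable. At every point `x`
where `T x ≠ 0`, the function `y ↦ ‖T y‖^{p/2}` is twice continuously differentiable in a
neighborhood of `x` and satisfies
`−Δ(‖T‖^{p/2})(x) ≤ −(p/2)·‖T x‖^{(p/2)−2}·⟨T x, ΔT x⟩`. -/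
theorem norm_pow_laplacian_bound {n : ℕ} {F : Type*}
    [NormedAddCommGroup F] [InnerProductSpace ℝ F] [FiniteDimensional ℝ F]
    (p : ℝ) (hp : 2 ≤ p)
    (T : EuclideanSpace ℝ (Fin n) → F) (hT : ContDiff ℝ 2 T)
    (x : EuclideanSpace ℝ (Fin n)) (hx : T x ≠ 0) :
    ContDiffAt ℝ 2 (fun y => ‖T y‖ ^ (p / 2)) x ∧
      -(lap (fun y => ‖T y‖ ^ (p / 2)) x) ≤
        -(p / 2 * ‖T x‖ ^ (p / 2 - 2) * ⟪T x, lap T x⟫) :=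
  norm_pow_laplacian_bound_general p hp T hT x hx
end

section
/- Let c₂ ≥ 0 and r₀ > 0, and let f : (0, r₀] → ℝ be a nonnegative differentiable function satisfying f(r) ≤ (r/4)·f′(r) + c₂·r⁴ for all r ∈ (0, r₀]. Then for all r ∈ (0, r₀], f(r) ≤ ( r₀^{−4}·f(r₀) + 4·c₂·ln(r₀/r) )·r⁴. -/
/-!
Multiplying `f ≤ (r/n)·f' + c·rⁿ` by `n / r^(n+1)` says exactly that
`g(r) = r⁻ⁿ·f(r) + n·c·log r` is nondecreasing, and `g r ≤ g r₀` is the claim.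
-/

open Set Real

theorem hasDerivAt_inv_pow_mul_add_mul_log {f : ℝ → ℝ} {f'x c x : ℝ} (n : ℕ) (hn : n ≠ 0)
    (hx : x ≠ 0) (hf : HasDerivAt f f'x x) :
    HasDerivAt (fun y => (y ^ n)⁻¹ * f y + n * c * log y)
      (n / x ^ (n + 1) * (x / n * f'x + c * x ^ n - f x)) x := by
  have hinv : HasDerivAt (fun y : ℝ => (y ^ n)⁻¹) (-(n * x ^ (n - 1)) / (x ^ n) ^ 2) x :=
    (hasDerivAt_pow n x).inv (pow_ne_zero n hx)
  refine ((hinv.mul hf).add ((hasDerivAt_log hx).const_mul (n * c))).congr_deriv ?_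
  obtain ⟨m, rfl⟩ := Nat.exists_eq_add_one_of_ne_zero hn
  rw [Nat.add_sub_cancel]
  field_simp
  ring

theorem monotoneOn_inv_pow_mul_add_mul_log {f f' : ℝ → ℝ} {c b : ℝ} (n : ℕ) (hn : n ≠ 0)
    (hderiv : ∀ r ∈ Ioc 0 b, HasDerivAt f (f' r) r)
    (hineq : ∀ r ∈ Ioc 0 b, f r ≤ r / n * f' r + c * r ^ n) :
    MonotoneOn (fun y => (y ^ n)⁻¹ * f y + n * c * log y) (Ioc 0 b) := by
  have hg (r : ℝ) (hr : r ∈ Ioc 0 b) := hasDerivAt_inv_pow_mul_add_mul_log (c := c) n hn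
    hr.1.ne' (hderiv r hr)
  refine monotoneOn_of_hasDerivWithinAt_nonneg (convex_Ioc 0 b)
    (f' := fun r => n / r ^ (n + 1) * (r / n * f' r + c * r ^ n - f r))
    (fun r hr => (hg r hr).continuousAt.continuousWithinAt)
    ?_ ?_ <;> rw [interior_Ioc]
  · exact fun r hr => (hg r (Ioo_subset_Ioc_self hr)).hasDerivWithinAt
  · intro r hr
    have hfr := hineq r (Ioo_subset_Ioc_self hr)
    exact mul_nonneg (div_nonneg n.cast_nonneg (pow_pos hr.1 _).le) (by linarith)

theorem le_mul_pow_of_le_div_mul_deriv_add_mul_pow {f f' : ℝ → ℝ} {c r₀ : ℝ} (n : ℕ)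
    (hn : n ≠ 0) (hderiv : ∀ r ∈ Ioc 0 r₀, HasDerivAt f (f' r) r)
    (hineq : ∀ r ∈ Ioc 0 r₀, f r ≤ r / n * f' r + c * r ^ n) {r : ℝ} (hr : r ∈ Ioc 0 r₀) :
    f r ≤ ((r₀ ^ n)⁻¹ * f r₀ + n * c * log (r₀ / r)) * r ^ n := by
  have hr₀ : r₀ ∈ Ioc 0 r₀ := ⟨hr.1.trans_le hr.2, le_rfl⟩
  have hmono := monotoneOn_inv_pow_mul_add_mul_log n hn hderiv hineq hr hr₀ hr.2
  have hrn : 0 < r ^ n := pow_pos hr.1 n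
  rw [log_div hr₀.1.ne' hr.1.ne']
  calc f r = ((r ^ n)⁻¹ * f r + n * c * log r - n * c * log r) * r ^ n := by
        field_simp; ring
    _ ≤ ((r₀ ^ n)⁻¹ * f r₀ + n * c * log r₀ - n * c * log r) * r ^ n := by
        gcongr
    _ = _ := by ring

theorem curvature_decay_ODE_borderline_general (c₂ r₀ : ℝ)
    (f f' : ℝ → ℝ)
    (hderiv : ∀ r ∈ Set.Ioc (0 : ℝ) r₀, HasDerivAt f (f' r) r)
    (hineq : ∀ r ∈ Set.Ioc (0 : ℝ) r₀, f r ≤ r / 4 * f' r + c₂ * r ^ 4) :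
    ∀ r ∈ Set.Ioc (0 : ℝ) r₀,
      f r ≤ ((r₀ ^ 4)⁻¹ * f r₀ + 4 * c₂ * Real.log (r₀ / r)) * r ^ 4 := by
  intro r hr
  exact_mod_cast le_mul_pow_of_le_div_mul_deriv_add_mul_pow 4 four_ne_zero hderiv
    (by exact_mod_cast hineq) hr

/-- Let `c₂ ≥ 0` and `r₀ > 0`, and let `f : (0, r₀] → ℝ` be a nonnegative
differentiable function satisfying `f(r) ≤ (r/4)·f′(r) + c₂·r⁴` for all `r ∈ (0, r₀]`.
Then for all `r ∈ (0, r₀]`, `f(r) ≤ (r₀^{−4}·f(r₀) + 4·c₂·ln(r₀/r))·r⁴`. -/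
theorem curvature_decay_ODE_borderline (c₂ r₀ : ℝ) (hc₂ : 0 ≤ c₂) (hr₀ : 0 < r₀)
    (f f' : ℝ → ℝ)
    (hderiv : ∀ r ∈ Set.Ioc (0 : ℝ) r₀, HasDerivAt f (f' r) r)
    (hnonneg : ∀ r ∈ Set.Ioc (0 : ℝ) r₀, 0 ≤ f r)
    (hineq : ∀ r ∈ Set.Ioc (0 : ℝ) r₀, f r ≤ r / 4 * f' r + c₂ * r ^ 4) :
    ∀ r ∈ Set.Ioc (0 : ℝ) r₀,
      f r ≤ ((r₀ ^ 4)⁻¹ * f r₀ + 4 * c₂ * Real.log (r₀ / r)) * r ^ 4 :=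
  curvature_decay_ODE_borderline_general c₂ r₀ f f' hderiv hineq
end
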